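/- In the polynomial ring ℂ[E, F, H, e₁,…,e_N, f₁,…,f_N], define Q₀ := H² + 4FE, Q_{ij} := (1/2)(f_i e_j − f_j e_i), and C_{ij} := E·f_i f_j − (1/2)H·(f_i e_j + f_j e_i) − F·e_i e_j. Then for all 1 ≤ i, j, k, l ≤ N the following identities hold: Q_{ij}Q_{kl} + Q_{il}Q_{jk} + Q_{ik}Q_{lj} = 0 and C_{ij}C_{kl} − C_{ik}C_{jl} + Q₀·Q_{il}Q_{jk} = 0. -/
import Mathlib


open MvPolynomial

noncomputable section

/-- Variables `E`, `F`, `H` (indexed by `Fin 3`) and `e₁,…,e_N`, `f₁,…,f_N`. -/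
abbrev SVar (N : ℕ) := Fin 3 ⊕ (Fin N ⊕ Fin N)

def Ev (N : ℕ) : MvPolynomial (SVar N) ℂ := X (Sum.inl 0)
def Fv (N : ℕ) : MvPolynomial (SVar N) ℂ := X (Sum.inl 1)
def Hv (N : ℕ) : MvPolynomial (SVar N) ℂ := X (Sum.inl 2)
def ev (N : ℕ) (i : Fin N) : MvPolynomial (SVar N) ℂ := X (Sum.inr (Sum.inl i))
def fv (N : ℕ) (i : Fin N) : MvPolynomial (SVar N) ℂ := X (Sum.inr (Sum.inr i))

/-- `Q₀ := H² + 4FE`. -/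
def Q0 (N : ℕ) : MvPolynomial (SVar N) ℂ := Hv N ^ 2 + 4 * Fv N * Ev N

/-- `Q_{ij} := ½(f_i e_j − f_j e_i)`. -/
def Qp (N : ℕ) (i j : Fin N) : MvPolynomial (SVar N) ℂ :=
  C (2⁻¹ : ℂ) * (fv N i * ev N j - fv N j * ev N i)

/-- `C_{ij} := E·f_i f_j − ½H·(f_i e_j + f_j e_i) − F·e_i e_j`. -/
def Cp (N : ℕ) (i j : Fin N) : MvPolynomial (SVar N) ℂ :=
  Ev N * fv N i * fv N j - C (2⁻¹ : ℂ) * Hv N * (fv N i * ev N j + fv N j * ev N i)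
    - Fv N * ev N i * ev N j

/-- The Plücker-type relations
`Q_{ij}Q_{kl} + Q_{il}Q_{jk} + Q_{ik}Q_{lj} = 0` and
`C_{ij}C_{kl} − C_{ik}C_{jl} + Q₀·Q_{il}Q_{jk} = 0`. -/
theorem Q_C_relations (N : ℕ) (i j k l : Fin N) :
    Qp N i j * Qp N k l + Qp N i l * Qp N j k + Qp N i k * Qp N l j = 0 ∧
    Cp N i j * Cp N k l - Cp N i k * Cp N j l + Q0 N * Qp N i l * Qp N j k = 0 := by
  have hC : (C (2⁻¹ : ℂ) : MvPolynomial (SVar N) ℂ) ^ 2 * 4 = 1 := by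
    rw [show (4 : MvPolynomial (SVar N) ℂ) = C 4 from (map_ofNat C 4).symm, ← C_pow, ← C_mul]
    norm_num
  constructor
  · simp only [Qp]; ring
  · simp only [Qp, Cp, Q0]
    linear_combination (Ev N * fv N i * fv N j * Fv N * ev N l * ev N k
      - Ev N * fv N i * ev N j * Fv N * fv N k * ev N l
      - Ev N * fv N j * ev N i * Fv N * fv N l * ev N k
      + Ev N * ev N j * ev N i * Fv N * fv N k * fv N l) * hC
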